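/- Let Θ be a type with a distinguished element θ0, let k ≥ 1, and let Σ̃, Ω : Θ × Θ → (real k×k matrices) satisfy: (kernel symmetry) Σ̃(θ1,θ2)ᵀ = Σ̃(θ2,θ1) and Ω(θ1,θ2)ᵀ = Ω(θ2,θ1) for all θ1, θ2; (nondegeneracy) Σ̃(θ,θ) and Ω(θ,θ) are symmetric positive definite for every θ; and (condition (9)) Ω(θ*,θ*)⁻¹ * Ω(θ*,θ) = Σ̃(θ*,θ*)⁻¹ * Σ̃(θ*,θ) for all θ*, θ ∈ Θ. Define R(θ0,θ) = Σ̃(θ0,θ0)^{-1/2} * Σ̃(θ0,θ) * Σ̃(θ,θ)^{-1/2} and D(θ) = R(θ0,θ) * R(θ0,θ)ᵀ. Assume that no linear subspace of ℝ^k other than the zero subspace and all of ℝ^k is invariant under every matrix D(θ), θ ∈ Θ. Then there exists λ > 0 such that Ω(θ0,θ) = λ · Σ̃(θ0,θ) for all θ ∈ Θ (in particular Ω(θ0,θ0) = λ·Σ̃(θ0,θ0)). -/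

import Mathlib

/-!
Condition (9) and the symmetry of both kernels express `Ω(a,b)` from either side:
`Ω(a,a) Σ̃(a,a)⁻¹ Σ̃(a,b) = Ω(a,b) = Σ̃(a,b) Σ̃(b,b)⁻¹ Ω(b,b)`. With `S = Σ̃(θ0,θ0)^{1/2}`, this
makes the symmetric matrix `S⁻¹ Ω(θ0,θ0) S⁻¹` commute with every
`D(θ) = S⁻¹ Σ̃(θ0,θ) Σ̃(θ,θ)⁻¹ Σ̃(θ,θ0) S⁻¹`, so its eigenspaces are common invariant subspaces of
the `D(θ)`. By irreducibility one of them is everything (Schur's lemma), so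
`Ω(θ0,θ0) = λ Σ̃(θ0,θ0)` with `λ > 0` by positive definiteness, and (9) at `θ0` propagates this
to `Ω(θ0,θ) = λ Σ̃(θ0,θ)`.
-/

open Matrix

open scoped ComplexOrder in
noncomputable def Matrix.PosSemidef.sqrt {n 𝕜 : Type*} [Fintype n] [DecidableEq n] [RCLike 𝕜]
    {A : Matrix n n 𝕜} (hA : A.PosSemidef) : Matrix n n 𝕜 :=
  hA.1.eigenvectorUnitary.1 * diagonal ((↑) ∘ (√·) ∘ hA.1.eigenvalues) *
    (star hA.1.eigenvectorUnitary : Matrix n n 𝕜)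

namespace Matrix.PosSemidef

section RCLike

open scoped ComplexOrder

variable {n 𝕜 : Type*} [Fintype n] [DecidableEq n] [RCLike 𝕜] {A : Matrix n n 𝕜}

theorem sqrt_eq_cfc (hA : A.PosSemidef) : hA.sqrt = cfc Real.sqrt A := by
  rw [hA.1.cfc_eq, IsHermitian.cfc, Unitary.conjStarAlgAut_apply]
  rfl

theorem sqrt_mul_self (hA : A.PosSemidef) : hA.sqrt * hA.sqrt = A := by
  have hspec : ∀ x ∈ spectrum ℝ A, 0 ≤ x := by
    rw [hA.1.spectrum_real_eq_range_eigenvalues]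
    rintro _ ⟨i, rfl⟩
    exact hA.eigenvalues_nonneg i
  calc hA.sqrt * hA.sqrt = cfc (fun x => √x * √x) A := by rw [sqrt_eq_cfc, cfc_mul ..]
    _ = cfc id A := cfc_congr fun x hx => Real.mul_self_sqrt (hspec x hx)
    _ = A := cfc_id ℝ A hA.1.isSelfAdjoint

theorem isHermitian_sqrt (hA : A.PosSemidef) : hA.sqrt.IsHermitian := by
  rw [sqrt_eq_cfc]
  exact cfc_predicate _ _

end RCLike

variable {m n : Type*} [Fintype n] [DecidableEq n] {A : Matrix n n ℝ}

theorem transpose_sqrt (hA : A.PosSemidef) : hA.sqrtᵀ = hA.sqrt :=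
  (isHermitian_iff_isSymm.1 hA.isHermitian_sqrt).eq

theorem mul_inv_sqrt_mul_transpose (hA : A.PosSemidef) (X : Matrix m n ℝ) :
    X * hA.sqrt⁻¹ * (X * hA.sqrt⁻¹)ᵀ = X * A⁻¹ * Xᵀ := by
  rw [transpose_mul, transpose_nonsing_inv, transpose_sqrt, Matrix.mul_assoc X,
    ← Matrix.mul_assoc _⁻¹, ← mul_inv_rev, sqrt_mul_self, Matrix.mul_assoc]

end Matrix.PosSemidef

namespace Matrix

variable {n K : Type*} [Fintype n] [DecidableEq n]

theorem PosDef.isUnit_det_sqrt {A : Matrix n n ℝ} (hA : A.PosDef) :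
    IsUnit hA.posSemidef.sqrt.det := by
  have h := hA.det_pos.ne'.isUnit
  rw [← hA.posSemidef.sqrt_mul_self, det_mul] at h
  exact isUnit_of_mul_isUnit_left h

omit [DecidableEq n] in
theorem PosDef.pos_of_eq_smul [Nonempty n] {A B : Matrix n n ℝ} (hA : A.PosDef) (hB : B.PosDef)
    {c : ℝ} (h : A = c • B) : 0 < c := by
  obtain ⟨x, hx⟩ := exists_ne (0 : n → ℝ)
  have hAx := hA.dotProduct_mulVec_pos hx
  rw [h, smul_mulVec, dotProduct_smul, smul_eq_mul] at hAx
  exact pos_of_mul_pos_left hAx (hB.dotProduct_mulVec_pos hx).le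

section CommRing

variable [CommRing K] {S A X Y : Matrix n n K}

theorem commute_conj_inv (hS : S * S = A) (h : X * A⁻¹ * Y = Y * A⁻¹ * X) :
    Commute (S⁻¹ * X * S⁻¹) (S⁻¹ * Y * S⁻¹) := by
  have hconj : ∀ U V : Matrix n n K,
      S⁻¹ * U * S⁻¹ * (S⁻¹ * V * S⁻¹) = S⁻¹ * (U * A⁻¹ * V) * S⁻¹ := fun U V => by
    simp only [← hS, mul_inv_rev, Matrix.mul_assoc]
  rw [Commute, SemiconjBy, hconj, hconj, h]

theorem eq_smul_of_conj_inv_eq_smul_one (hS : S * S = A) (hdet : IsUnit S.det) {μ : K}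
    (h : S⁻¹ * X * S⁻¹ = μ • 1) : X = μ • A := by
  calc X = S * (S⁻¹ * X * S⁻¹) * S := by
        simp only [Matrix.mul_assoc, nonsing_inv_mul _ hdet, Matrix.mul_one,
          mul_nonsing_inv_cancel_left _ _ hdet]
    _ = μ • A := by rw [h, Matrix.mul_smul, Matrix.mul_one, Matrix.smul_mul, hS]

end CommRing

theorem eq_smul_one_of_commute_of_hasEigenvalue [Field K] {ι : Type*} {B : Matrix n n K} {μ : K}
    (hμ : Module.End.HasEigenvalue (toLin' B) μ) {D : ι → Matrix n n K}
    (hcomm : ∀ i, Commute B (D i))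
    (hirr : ∀ V : Submodule K (n → K), (∀ i, ∀ v ∈ V, D i *ᵥ v ∈ V) → V = ⊥ ∨ V = ⊤) :
    B = μ • 1 := by
  have htop : Module.End.eigenspace (toLin' B) μ = ⊤ :=
    (hirr _ fun i => Module.End.mapsTo_genEigenspace_of_comm ((hcomm i).map toLinAlgEquiv') μ 1
      ).resolve_left (Module.End.hasEigenvalue_iff.1 hμ)
  rw [Module.End.eigenspace_def, LinearMap.ker_eq_top, sub_eq_zero] at htop
  apply toLin'.injective
  rw [htop, map_smul, toLin'_one]
  rfl

theorem IsHermitian.eq_smul_one_of_commute {ι : Type*} [Nonempty n] {B : Matrix n n ℝ}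
    (hB : B.IsHermitian) {D : ι → Matrix n n ℝ} (hcomm : ∀ i, Commute B (D i))
    (hirr : ∀ V : Submodule ℝ (n → ℝ), (∀ i, ∀ v ∈ V, D i *ᵥ v ∈ V) → V = ⊥ ∨ V = ⊤) :
    ∃ μ : ℝ, B = μ • 1 :=
  have i := Classical.arbitrary n
  ⟨_, eq_smul_one_of_commute_of_hasEigenvalue (.of_mem_spectrum <| by
    rw [spectrum_toLin']; exact hB.eigenvalues_mem_spectrum_real i) hcomm hirr⟩

end Matrix

section PriorInvariance

variable {ι n K : Type*} [Fintype n] [DecidableEq n] [Field K] {Sg Om : ι → ι → Matrix n n K}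

theorem prior_eq_diag_mul {a b : ι} (hOm : IsUnit (Om a a).det)
    (hcond : (Om a a)⁻¹ * Om a b = (Sg a a)⁻¹ * Sg a b) :
    Om a b = Om a a * ((Sg a a)⁻¹ * Sg a b) := by
  rw [← hcond, mul_nonsing_inv_cancel_left _ _ hOm]

theorem prior_eq_mul_diag {a b : ι} (hSgSym : ∀ a b, (Sg a b)ᵀ = Sg b a)
    (hOmSym : ∀ a b, (Om a b)ᵀ = Om b a) (hOm : IsUnit (Om b b).det)
    (hcond : (Om b b)⁻¹ * Om b a = (Sg b b)⁻¹ * Sg b a) :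
    Om a b = Sg a b * ((Sg b b)⁻¹ * Om b b) := by
  have h := congrArg transpose (prior_eq_diag_mul hOm hcond)
  rwa [hOmSym, transpose_mul, transpose_mul, transpose_nonsing_inv, hSgSym, hSgSym, hOmSym,
    Matrix.mul_assoc] at h

theorem prior_diag_exchange (hSgSym : ∀ a b, (Sg a b)ᵀ = Sg b a)
    (hOmSym : ∀ a b, (Om a b)ᵀ = Om b a) (hOm : ∀ θ, IsUnit (Om θ θ).det)
    (hcond : ∀ a b, (Om a a)⁻¹ * Om a b = (Sg a a)⁻¹ * Sg a b) (a b : ι) :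
    Om a a * ((Sg a a)⁻¹ * Sg a b) = Sg a b * ((Sg b b)⁻¹ * Om b b) := by
  rw [← prior_eq_diag_mul (hOm a) (hcond a b),
    prior_eq_mul_diag hSgSym hOmSym (hOm b) (hcond b a)]

theorem prior_diag_commute (hSgSym : ∀ a b, (Sg a b)ᵀ = Sg b a)
    (hOmSym : ∀ a b, (Om a b)ᵀ = Om b a) (hOm : ∀ θ, IsUnit (Om θ θ).det)
    (hcond : ∀ a b, (Om a a)⁻¹ * Om a b = (Sg a a)⁻¹ * Sg a b) (c θ : ι) :
    Om c c * (Sg c c)⁻¹ * (Sg c θ * (Sg θ θ)⁻¹ * Sg θ c) =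
      Sg c θ * (Sg θ θ)⁻¹ * Sg θ c * (Sg c c)⁻¹ * Om c c := by
  have hexch := prior_diag_exchange hSgSym hOmSym hOm hcond
  calc Om c c * (Sg c c)⁻¹ * (Sg c θ * (Sg θ θ)⁻¹ * Sg θ c)
      = Om c c * ((Sg c c)⁻¹ * Sg c θ) * ((Sg θ θ)⁻¹ * Sg θ c) := by
        simp only [Matrix.mul_assoc]
    _ = Sg c θ * (Sg θ θ)⁻¹ * (Om θ θ * ((Sg θ θ)⁻¹ * Sg θ c)) := by
      rw [hexch]; simp only [Matrix.mul_assoc]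
    _ = Sg c θ * (Sg θ θ)⁻¹ * Sg θ c * (Sg c c)⁻¹ * Om c c := by
      rw [hexch]; simp only [Matrix.mul_assoc]

end PriorInvariance

/-- Theorem 3(b) of Andrews–Mikusheva, 'Optimal Decision Rules for Weak GMM':
under kernel symmetry, nondegeneracy, the invariance condition (9), and the
no-common-invariant-subspace condition for the family `D(θ) = R(θ0,θ)R(θ0,θ)ᵀ`,
the prior covariance kernel `Ω` must satisfy `Ω(θ0,·) = λ Σ̃(θ0,·)` for some `λ > 0`. -/
theorem stmt_2 {Θ : Type*} (θ0 : Θ) (k : ℕ) (hk : 1 ≤ k)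
    (Sg Om : Θ → Θ → Matrix (Fin k) (Fin k) ℝ)
    (hSgSym : ∀ θ1 θ2, (Sg θ1 θ2)ᵀ = Sg θ2 θ1)
    (hOmSym : ∀ θ1 θ2, (Om θ1 θ2)ᵀ = Om θ2 θ1)
    (hSgPD : ∀ θ, (Sg θ θ).PosDef)
    (hOmPD : ∀ θ, (Om θ θ).PosDef)
    (hcond : ∀ θs θ, (Om θs θs)⁻¹ * Om θs θ = (Sg θs θs)⁻¹ * Sg θs θ)
    (R D : Θ → Matrix (Fin k) (Fin k) ℝ)
    (hR : ∀ θ, R θ = (PosSemidef.sqrt (hSgPD θ0).posSemidef)⁻¹ * Sg θ0 θ * (PosSemidef.sqrt (hSgPD θ).posSemidef)⁻¹)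
    (hD : ∀ θ, D θ = R θ * (R θ)ᵀ)
    (hirr : ∀ V : Submodule ℝ (Fin k → ℝ),
      (∀ θ : Θ, ∀ v ∈ V, (D θ).mulVec v ∈ V) → V = ⊥ ∨ V = ⊤) :
    ∃ lam : ℝ, 0 < lam ∧ ∀ θ, Om θ0 θ = lam • Sg θ0 θ := by
  have : Nonempty (Fin k) := ⟨⟨0, hk⟩⟩
  have hOm θ : IsUnit (Om θ θ).det := (hOmPD θ).det_pos.ne'.isUnit
  set hS := (hSgPD θ0).posSemidef
  have hDconj θ : D θ = hS.sqrt⁻¹ * (Sg θ0 θ * (Sg θ θ)⁻¹ * Sg θ θ0) * hS.sqrt⁻¹ := by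
    rw [hD, hR, (hSgPD θ).posSemidef.mul_inv_sqrt_mul_transpose, transpose_mul,
      transpose_nonsing_inv, hS.transpose_sqrt, hSgSym]
    simp only [Matrix.mul_assoc]
  have hB : (hS.sqrt⁻¹ * Om θ0 θ0 * hS.sqrt⁻¹).IsHermitian := by
    rw [isHermitian_iff_isSymm, IsSymm, transpose_mul, transpose_mul, transpose_nonsing_inv,
      hS.transpose_sqrt, hOmSym, Matrix.mul_assoc]
  obtain ⟨μ, hμ⟩ := hB.eq_smul_one_of_commute (fun θ => hDconj θ ▸
    commute_conj_inv hS.sqrt_mul_self (prior_diag_commute hSgSym hOmSym hOm hcond θ0 θ)) hirr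
  have hOm0 := eq_smul_of_conj_inv_eq_smul_one hS.sqrt_mul_self (hSgPD θ0).isUnit_det_sqrt hμ
  refine ⟨μ, (hOmPD θ0).pos_of_eq_smul (hSgPD θ0) hOm0, fun θ => ?_⟩
  rw [prior_eq_diag_mul (hOm θ0) (hcond θ0 θ), hOm0, Matrix.smul_mul,
    mul_nonsing_inv_cancel_left _ _ (hSgPD θ0).det_pos.ne'.isUnit]
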